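/- Let ℓ ≥ 1 and let M₁, M₂, M₃ be real symmetric positive semidefinite ℓ×ℓ matrices such that every element of B(M₁,M₂,M₃) has rank at least φ(ℓ). Then every element of the feasible set F(M₁,M₂,M₃) has rank at least 3ℓ + φ(ℓ). -/

import Mathlib

open Matrix

noncomputable section

/-- The `3ℓ×ℓ` block matrix `[I_ℓ; I_ℓ; −I_ℓ]`. -/
def Wmat (l : ℕ) : Matrix (Fin (3*l)) (Fin l) ℝ :=
  Matrix.of fun i j =>
    (if (i : ℕ) = (j : ℕ) then 1 else 0) + (if (i : ℕ) = l + (j : ℕ) then 1 else 0)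
      - (if (i : ℕ) = 2*l + (j : ℕ) then 1 else 0)

/-- Membership in the set `B(M₁,M₂,M₃)`. -/
def Bset (l : ℕ) (M1 M2 M3 : Matrix (Fin l) (Fin l) ℝ)
    (X : Matrix (Fin (3*l)) (Fin (3*l)) ℝ) : Prop :=
  X.PosSemidef ∧
  (∀ i j : Fin l, X ⟨(i : ℕ), by omega⟩ ⟨(j : ℕ), by omega⟩ = M1 i j) ∧
  (∀ i j : Fin l, X ⟨l + (i : ℕ), by omega⟩ ⟨l + (j : ℕ), by omega⟩ = M2 i j) ∧
  (∀ i j : Fin l, X ⟨2*l + (i : ℕ), by omega⟩ ⟨2*l + (j : ℕ), by omega⟩ = M3 i j) ∧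
  (Wmat l)ᵀ * X * (Wmat l) = 0

/-- The `6ℓ×ℓ` block matrix `V = [−I_ℓ; −I_ℓ; −I_ℓ; I_ℓ; I_ℓ; −I_ℓ]`. -/
def Vmat (l : ℕ) : Matrix (Fin (6*l)) (Fin l) ℝ :=
  Matrix.of fun i j =>
    -(if (i : ℕ) = (j : ℕ) then 1 else 0) - (if (i : ℕ) = l + (j : ℕ) then 1 else 0)
    - (if (i : ℕ) = 2*l + (j : ℕ) then 1 else 0) + (if (i : ℕ) = 3*l + (j : ℕ) then 1 else 0)
    + (if (i : ℕ) = 4*l + (j : ℕ) then 1 else 0) - (if (i : ℕ) = 5*l + (j : ℕ) then 1 else 0)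

/-- Membership in the feasible set `F(M₁,M₂,M₃)`. -/
def Fset (l : ℕ) (M1 M2 M3 : Matrix (Fin l) (Fin l) ℝ)
    (X : Matrix (Fin (6*l)) (Fin (6*l)) ℝ) : Prop :=
  X.PosSemidef ∧
  (∀ i j : Fin (3*l), X ⟨(i : ℕ), by omega⟩ ⟨(j : ℕ), by omega⟩ = if i = j then (1:ℝ) else 0) ∧
  (∀ (i : Fin l) (j : Fin (2*l)), X ⟨3*l + (i : ℕ), by omega⟩ ⟨l + (j : ℕ), by omega⟩ = 0) ∧
  (∀ i j : Fin l, X ⟨4*l + (i : ℕ), by omega⟩ ⟨(j : ℕ), by omega⟩ = 0) ∧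
  (∀ i j : Fin l, X ⟨4*l + (i : ℕ), by omega⟩ ⟨2*l + (j : ℕ), by omega⟩ = 0) ∧
  (∀ (i : Fin l) (j : Fin (2*l)), X ⟨5*l + (i : ℕ), by omega⟩ ⟨(j : ℕ), by omega⟩ = 0) ∧
  (∀ i j : Fin l, X ⟨3*l + (i : ℕ), by omega⟩ ⟨3*l + (j : ℕ), by omega⟩
      = (if i = j then (1:ℝ) else 0) + M1 i j) ∧
  (∀ i j : Fin l, X ⟨4*l + (i : ℕ), by omega⟩ ⟨4*l + (j : ℕ), by omega⟩
      = (if i = j then (1:ℝ) else 0) + M2 i j) ∧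
  (∀ i j : Fin l, X ⟨5*l + (i : ℕ), by omega⟩ ⟨5*l + (j : ℕ), by omega⟩
      = (if i = j then (1:ℝ) else 0) + M3 i j) ∧
  (Vmat l)ᵀ * X * (Vmat l) = 0

/-- Feasibility predicate for the set in Definition of `φ`. -/
def phiFeas (l : ℕ) (U : Matrix (Fin (2*l)) (Fin l) ℝ)
    (M : Matrix (Fin l) (Fin l) ℝ)
    (Y : Matrix (Fin (2*l)) (Fin (2*l)) ℝ) : Prop :=
  Y.PosSemidef ∧ Uᵀ * Y * U = M ∧
  (∀ i j : Fin l, Y ⟨(i : ℕ), by omega⟩ ⟨(j : ℕ), by omega⟩ = if i = j then (1:ℝ) else 0) ∧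
  (∀ i j : Fin l, Y ⟨l + (i : ℕ), by omega⟩ ⟨l + (j : ℕ), by omega⟩ = if i = j then (1:ℝ) else 0)

/-- `φ(ℓ)`. -/
def phi (l : ℕ) : ℕ :=
  sInf {k : ℕ |
    ∀ (U : Matrix (Fin (2*l)) (Fin l) ℝ) (M : Matrix (Fin l) (Fin l) ℝ),
      M.IsSymm → (∃ Y, phiFeas l U M Y) → ∃ Y, phiFeas l U M Y ∧ Y.rank ≤ k}

/-!
Write `X` in blocks `[[I, B], [Bᵀ, D]]` of size `3ℓ`, each half cut into three `ℓ`-blocks.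
Since `X` is positive semidefinite, `VᵀXV = 0` forces `XV = 0`. The upper half of `XV = 0`
together with the prescribed zero blocks pins down `B = J := diag(I, I, -I)`, and the lower
half gives `D W = J [I; I; I] = W`. So the Schur complement `S = D - BᵀB = D - I` is positive
semidefinite, has diagonal blocks `M₁, M₂, M₃` and satisfies `S W = 0`, i.e. `S ∈ B(M₁,M₂,M₃)`,
while `rank X = 3ℓ + rank S`.
-/

section PosSemidef

variable {n m 𝕜 : Type*} [Fintype n] [RCLike 𝕜]

open scoped ComplexOrder MatrixOrder in
theorem Matrix.PosSemidef.mul_eq_zero_of_conjTranspose_mul_mul_eq_zero {X : Matrix n n 𝕜}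
    (hX : X.PosSemidef) {V : Matrix n m 𝕜} (h : Vᴴ * X * V = 0) : X * V = 0 := by
  classical
  obtain ⟨B, rfl⟩ := CStarAlgebra.nonneg_iff_eq_star_mul_self.mp hX.nonneg
  rw [star_eq_conjTranspose] at h ⊢
  have hBV : B * V = 0 := by
    rw [← conjTranspose_mul_self_eq_zero, conjTranspose_mul, ← h]
    simp only [Matrix.mul_assoc]
  rw [Matrix.mul_assoc, hBV, Matrix.mul_zero]

end PosSemidef

theorem Submodule.finrank_prod {K M N : Type*} [DivisionRing K] [AddCommGroup M]
    [AddCommGroup N] [Module K M] [Module K N] [FiniteDimensional K M] [FiniteDimensional K N]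
    (p : Submodule K M) (q : Submodule K N) :
    Module.finrank K (p.prod q) = Module.finrank K p + Module.finrank K q := by
  have hinj : Function.Injective (p.subtype.prodMap q.subtype) :=
    Prod.map_injective.mpr ⟨p.injective_subtype, q.injective_subtype⟩
  rw [← Module.finrank_prod, ← LinearMap.finrank_range_of_inj hinj, LinearMap.range_prodMap,
    Submodule.range_subtype, Submodule.range_subtype]

section Rank

variable {m n m' n' K : Type*} [Fintype m] [Fintype n] [Fintype m'] [Fintype n'] [Field K]

theorem Matrix.rank_fromBlocks_zero_zero (A : Matrix m m' K) (D : Matrix n n' K) :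
    (fromBlocks A 0 0 D).rank = A.rank + D.rank := by
  let e := LinearEquiv.sumArrowLequivProdArrow m' n' K K
  let e' := LinearEquiv.sumArrowLequivProdArrow m n K K
  have hmul : (fromBlocks A 0 0 D).mulVecLin
      = e'.symm.toLinearMap ∘ₗ (A.mulVecLin.prodMap D.mulVecLin) ∘ₗ e.toLinearMap := by
    refine LinearMap.ext fun v => funext fun i => ?_
    rcases i with i | i <;>
      simp [e, e', fromBlocks_mulVec, LinearEquiv.sumArrowLequivProdArrow,
        Equiv.sumArrowEquivProdArrow]
  rw [rank, hmul, LinearMap.range_comp, LinearMap.range_comp_of_range_eq_top _ e.range,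
    LinearEquiv.finrank_map_eq, LinearMap.range_prodMap, Submodule.finrank_prod]
  rfl

theorem Matrix.rank_fromBlocks_one₁₁ [DecidableEq m] [DecidableEq n] (B : Matrix m n K)
    (C : Matrix n m K) (D : Matrix n n K) :
    (fromBlocks 1 B C D).rank = Fintype.card m + (D - C * B).rank := by
  let := invertibleOne (α := Matrix m m K)
  rw [fromBlocks_eq_of_invertible₁₁, invOf_one, Matrix.mul_one, Matrix.one_mul,
    rank_mul_eq_left_of_isUnit_det _ _ (by simp),
    rank_mul_eq_right_of_isUnit_det _ _ (by simp),
    rank_fromBlocks_zero_zero, rank_one]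

end Rank

section BlockColumn

variable {ι n R : Type*} [Fintype ι] [Fintype n] [DecidableEq n] [CommRing R]

variable (n) in
def blockColumn (s : ι → R) : Matrix (ι × n) n R :=
  of fun x j => if x.2 = j then s x.1 else 0

theorem mul_blockColumn_apply (K : Matrix (ι × n) (ι × n) R) (s : ι → R) (x : ι × n)
    (j : n) :
    (K * blockColumn n s) x j = ∑ b, K x (b, j) * s b := by
  simp [blockColumn, mul_apply, Fintype.sum_prod_type, mul_ite]

variable [DecidableEq ι]

theorem diagonal_mul_blockColumn (s t : ι → R) :
    (diagonal fun x : ι × n => s x.1) * blockColumn n t = blockColumn n (s * t) := by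
  ext x j
  simp [blockColumn, mul_ite]

theorem eq_diagonal_of_mul_blockColumn {K : Matrix (ι × n) (ι × n) R}
    (hK : ∀ a b i j, a ≠ b → K (a, i) (b, j) = 0) {s : ι → R} (hs : ∀ a, s a * s a = 1)
    (h : K * blockColumn n s = blockColumn n 1) : K = diagonal fun x => s x.1 := by
  ext ⟨a, i⟩ ⟨b, j⟩
  obtain rfl | hab := eq_or_ne a b
  · have hrow := congr_fun₂ h (a, i) j
    rw [mul_blockColumn_apply, Finset.sum_eq_single a
      (fun b _ hb => by rw [hK a b i j hb.symm, zero_mul]) (by simp)] at hrow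
    calc K (a, i) (a, j) = K (a, i) (a, j) * s a * s a := by rw [mul_assoc, hs, mul_one]
      _ = _ := by simp [hrow, blockColumn, diagonal_apply, Prod.ext_iff]
  · simp [hK a b i j hab, hab]

end BlockColumn

def blockSigns : Fin 3 → ℝ := ![1, 1, -1]

theorem blockSigns_mul_self (a : Fin 3) : blockSigns a * blockSigns a = 1 := by
  fin_cases a <;> norm_num [blockSigns]

def blockSignDiag (l : ℕ) : Matrix (Fin 3 × Fin l) (Fin 3 × Fin l) ℝ :=
  diagonal fun x => blockSigns x.1

theorem blockSignDiag_mul_self (l : ℕ) : blockSignDiag l * blockSignDiag l = 1 := by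
  simp [blockSignDiag, blockSigns_mul_self]

theorem blockSignDiag_conjTranspose (l : ℕ) : (blockSignDiag l)ᴴ = blockSignDiag l := by
  simp [blockSignDiag]

def halfBlockEquiv (l : ℕ) : (Fin 3 × Fin l) ⊕ (Fin 3 × Fin l) ≃ Fin (6 * l) :=
  (Equiv.sumCongr finProdFinEquiv finProdFinEquiv).trans
    (finSumFinEquiv.trans (finCongr (by ring)))

section Indexing

variable {l : ℕ}

theorem halfBlockEquiv_inl (x : Fin 3 × Fin l) :
    halfBlockEquiv l (.inl x) = ⟨finProdFinEquiv x, by omega⟩ := by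
  ext
  simp [halfBlockEquiv]

theorem halfBlockEquiv_inr (x : Fin 3 × Fin l) :
    halfBlockEquiv l (.inr x) = ⟨3 * l + finProdFinEquiv x, by omega⟩ := by
  ext
  simp [halfBlockEquiv, add_comm]

theorem Wmat_submatrix_finProdFinEquiv :
    (Wmat l).submatrix finProdFinEquiv id = blockColumn (Fin l) blockSigns := by
  ext ⟨a, i⟩ j
  fin_cases a <;> simp [Wmat, blockColumn, blockSigns, Fin.ext_iff] <;> split_ifs <;>
    first | omega | norm_num

theorem Vmat_submatrix_halfBlockEquiv :
    (Vmat l).submatrix (halfBlockEquiv l) id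
      = fromRows (-blockColumn (Fin l) (1 : Fin 3 → ℝ)) (blockColumn (Fin l) blockSigns) := by
  ext (⟨a, i⟩ | ⟨a, i⟩) j <;> fin_cases a <;>
    simp [Vmat, blockColumn, blockSigns, halfBlockEquiv_inl, halfBlockEquiv_inr, Fin.ext_iff] <;>
    split_ifs <;> first | omega | norm_num

end Indexing

def halfBlocks {l : ℕ} (X : Matrix (Fin (6 * l)) (Fin (6 * l)) ℝ) :
    Matrix ((Fin 3 × Fin l) ⊕ (Fin 3 × Fin l)) ((Fin 3 × Fin l) ⊕ (Fin 3 × Fin l)) ℝ :=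
  X.submatrix (halfBlockEquiv l) (halfBlockEquiv l)

namespace Fset

variable {l : ℕ} {M1 M2 M3 : Matrix (Fin l) (Fin l) ℝ}
  {X : Matrix (Fin (6 * l)) (Fin (6 * l)) ℝ}

theorem toBlocks₁₁_eq_one (hX : Fset l M1 M2 M3 X) : (halfBlocks X).toBlocks₁₁ = 1 := by
  ext x y
  simp only [halfBlocks, toBlocks₁₁, of_apply, submatrix_apply, halfBlockEquiv_inl]
  rw [hX.2.1]
  simp [one_apply]

theorem toBlocks₂₁_apply_of_ne (hX : Fset l M1 M2 M3 X) {a b : Fin 3} (hab : a ≠ b)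
    (i j : Fin l) :
    (halfBlocks X).toBlocks₂₁ (a, i) (b, j) = 0 := by
  obtain ⟨-, -, hz₁, hz₂, hz₃, hz₄, -⟩ := hX
  simp only [halfBlocks, toBlocks₂₁, of_apply, submatrix_apply, halfBlockEquiv_inl,
    halfBlockEquiv_inr, finProdFinEquiv_apply_val]
  fin_cases a <;> fin_cases b <;> simp only [ne_eq, not_true_eq_false] at hab
  · convert hz₁ i ⟨j, by omega⟩ using 2 <;> simp only [Fin.mk.injEq] <;> omega
  · convert hz₁ i ⟨l + j, by omega⟩ using 2 <;> simp only [Fin.mk.injEq] <;> omega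
  · convert hz₂ i j using 2 <;> simp only [Fin.mk.injEq] <;> omega
  · convert hz₃ i j using 2 <;> simp only [Fin.mk.injEq] <;> omega
  · convert hz₄ i ⟨j, by omega⟩ using 2 <;> simp only [Fin.mk.injEq] <;> omega
  · convert hz₄ i ⟨l + j, by omega⟩ using 2 <;> simp only [Fin.mk.injEq] <;> omega

theorem toBlocks₂₂_sub_one_apply_self (hX : Fset l M1 M2 M3 X) (a : Fin 3) (i j : Fin l) :
    ((halfBlocks X).toBlocks₂₂ - 1) (a, i) (a, j) = ![M1, M2, M3] a i j := by
  obtain ⟨-, -, -, -, -, -, hd₁, hd₂, hd₃, -⟩ := hX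
  have hD : (halfBlocks X).toBlocks₂₂ (a, i) (a, j)
      = (if i = j then (1 : ℝ) else 0) + ![M1, M2, M3] a i j := by
    simp only [halfBlocks, toBlocks₂₂, of_apply, submatrix_apply, halfBlockEquiv_inr,
      finProdFinEquiv_apply_val]
    fin_cases a
    · exact hd₁ i j
    · convert hd₂ i j using 2 <;> first | rfl | (simp only [Fin.mk.injEq]; omega)
    · convert hd₃ i j using 2 <;> first | rfl | (simp only [Fin.mk.injEq]; omega)
  rw [Matrix.sub_apply, hD, one_apply]
  simp

theorem halfBlocks_mul_fromRows (hX : Fset l M1 M2 M3 X) :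
    halfBlocks X * fromRows (-blockColumn (Fin l) (1 : Fin 3 → ℝ))
      (blockColumn (Fin l) blockSigns) = 0 := by
  obtain ⟨hpsd, -, -, -, -, -, -, -, -, hV⟩ := hX
  have hXV : X * Vmat l = 0 :=
    hpsd.mul_eq_zero_of_conjTranspose_mul_mul_eq_zero (by simpa using hV)
  rw [← Vmat_submatrix_halfBlockEquiv, halfBlocks,
    ← submatrix_mul _ _ _ _ _ (Equiv.bijective _), hXV]
  rfl

theorem toBlocks₁₂_eq_transpose (hX : Fset l M1 M2 M3 X) :
    (halfBlocks X).toBlocks₁₂ = (halfBlocks X).toBlocks₂₁ᵀ := by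
  ext x y
  simpa [halfBlocks, toBlocks₁₂, toBlocks₂₁] using
    (hX.1.1.apply (halfBlockEquiv l (.inl x)) (halfBlockEquiv l (.inr y))).symm

theorem halfBlocks_eq_fromBlocks (hX : Fset l M1 M2 M3 X) :
    halfBlocks X
      = fromBlocks 1 (blockSignDiag l) (blockSignDiag l) (halfBlocks X).toBlocks₂₂ := by
  have hB : (halfBlocks X).toBlocks₁₂ = blockSignDiag l := by
    have h := hX.halfBlocks_mul_fromRows
    rw [← fromBlocks_toBlocks (halfBlocks X), fromBlocks_mul_fromRows, hX.toBlocks₁₁_eq_one,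
      Matrix.one_mul, ← fromRows_zero, fromRows_ext_iff, neg_add_eq_zero] at h
    refine eq_diagonal_of_mul_blockColumn (fun a b i j hab => ?_) blockSigns_mul_self h.1.symm
    rw [hX.toBlocks₁₂_eq_transpose, transpose_apply, hX.toBlocks₂₁_apply_of_ne hab.symm]
  have hC : (halfBlocks X).toBlocks₂₁ = blockSignDiag l := by
    rw [← transpose_transpose (halfBlocks X).toBlocks₂₁, ← hX.toBlocks₁₂_eq_transpose,
      hB, blockSignDiag, diagonal_transpose]
  conv_lhs => rw [← fromBlocks_toBlocks (halfBlocks X), hX.toBlocks₁₁_eq_one, hB, hC]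

theorem toBlocks₂₂_sub_one_mul_blockColumn (hX : Fset l M1 M2 M3 X) :
    ((halfBlocks X).toBlocks₂₂ - 1) * blockColumn (Fin l) blockSigns = 0 := by
  have h := hX.halfBlocks_mul_fromRows
  rw [hX.halfBlocks_eq_fromBlocks, fromBlocks_mul_fromRows, ← fromRows_zero,
    fromRows_ext_iff] at h
  obtain ⟨-, h⟩ := h
  rw [Matrix.mul_neg, blockSignDiag, diagonal_mul_blockColumn, mul_one, neg_add_eq_zero] at h
  rw [Matrix.sub_mul, Matrix.one_mul, ← h, sub_self]

theorem rank_eq (hX : Fset l M1 M2 M3 X) :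
    X.rank = 3 * l + ((halfBlocks X).toBlocks₂₂ - 1).rank := by
  rw [← rank_submatrix X (halfBlockEquiv l) (halfBlockEquiv l), ← halfBlocks,
    hX.halfBlocks_eq_fromBlocks, rank_fromBlocks_one₁₁, blockSignDiag_mul_self]
  simp

theorem posSemidef_toBlocks₂₂_sub_one (hX : Fset l M1 M2 M3 X) :
    ((halfBlocks X).toBlocks₂₂ - 1).PosSemidef := by
  let := invertibleOne (α := Matrix (Fin 3 × Fin l) (Fin 3 × Fin l) ℝ)
  have h : (fromBlocks 1 (blockSignDiag l) (blockSignDiag l)ᴴ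
      (halfBlocks X).toBlocks₂₂).PosSemidef := by
    rw [blockSignDiag_conjTranspose, ← hX.halfBlocks_eq_fromBlocks]
    exact hX.1.submatrix _
  rwa [PosDef.fromBlocks₁₁ _ _ PosDef.one, inv_one, Matrix.mul_one, blockSignDiag_conjTranspose,
    blockSignDiag_mul_self] at h

end Fset

theorem bset_reindex_finProdFinEquiv {l : ℕ} {M1 M2 M3 : Matrix (Fin l) (Fin l) ℝ}
    {S : Matrix (Fin 3 × Fin l) (Fin 3 × Fin l) ℝ} (hS : S.PosSemidef)
    (hdiag : ∀ a i j, S (a, i) (a, j) = ![M1, M2, M3] a i j)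
    (hW : S * blockColumn (Fin l) blockSigns = 0) :
    Bset l M1 M2 M3 (reindex finProdFinEquiv finProdFinEquiv S) := by
  have hidx (a : Fin 3) (i : Fin l) (p : Fin (3 * l)) (hp : (p : ℕ) = i + l * a) :
      finProdFinEquiv.symm p = (a, i) := by
    rw [Equiv.symm_apply_eq]
    ext
    simp [hp]
  have hWmat : Wmat l = (blockColumn (Fin l) blockSigns).submatrix finProdFinEquiv.symm id := by
    rw [← Wmat_submatrix_finProdFinEquiv, submatrix_submatrix]
    simp
  refine ⟨hS.submatrix _, fun i j => ?_, fun i j => ?_, fun i j => ?_, ?_⟩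
  · rw [reindex_apply, submatrix_apply, hidx 0 i _ (by simp), hidx 0 j _ (by simp)]
    exact hdiag 0 i j
  · rw [reindex_apply, submatrix_apply, hidx 1 i _ (by simp; ring), hidx 1 j _ (by simp; ring)]
    exact hdiag 1 i j
  · rw [reindex_apply, submatrix_apply, hidx 2 i _ (by simp; ring), hidx 2 j _ (by simp; ring)]
    exact hdiag 2 i j
  · rw [Matrix.mul_assoc, reindex_apply, hWmat, ← submatrix_mul _ _ _ _ _ (Equiv.bijective _),
      hW]
    simp

theorem Fset_high_rank_general (l : ℕ)
    (M1 M2 M3 : Matrix (Fin l) (Fin l) ℝ)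
    (hB : ∀ X, Bset l M1 M2 M3 X → phi l ≤ X.rank) :
    ∀ X, Fset l M1 M2 M3 X → 3*l + phi l ≤ X.rank := by
  intro X hX
  have hS := bset_reindex_finProdFinEquiv hX.posSemidef_toBlocks₂₂_sub_one
    hX.toBlocks₂₂_sub_one_apply_self hX.toBlocks₂₂_sub_one_mul_blockColumn
  rw [hX.rank_eq, ← rank_reindex finProdFinEquiv finProdFinEquiv]
  exact Nat.add_le_add_left (hB _ hS) _

/-- If every element of `B(M₁,M₂,M₃)` has rank at least `φ(ℓ)`, then every element of the
feasible set `F(M₁,M₂,M₃)` has rank at least `3ℓ + φ(ℓ)`. -/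
theorem Fset_high_rank (l : ℕ) (hl : 1 ≤ l)
    (M1 M2 M3 : Matrix (Fin l) (Fin l) ℝ)
    (hM1 : M1.PosSemidef) (hM2 : M2.PosSemidef) (hM3 : M3.PosSemidef)
    (hB : ∀ X, Bset l M1 M2 M3 X → phi l ≤ X.rank) :
    ∀ X, Fset l M1 M2 M3 X → 3*l + phi l ≤ X.rank :=
  Fset_high_rank_general l M1 M2 M3 hB
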